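/- Let (α, N, B, κ_g, τ_g) be a Frenet apparatus of a timelike unit speed non-geodesic curve in S³₁ and let p ∈ S³₁ (so ⟨p,p⟩ = 1). Suppose there exist constants n₁, n₂, n ∈ ℝ with n₁² − n₂² + n² = 1 such that for all s ∈ ℝ: ⟨p, α'(s)⟩ = n₁·sinh(s) + n₂·cosh(s) and ⟨p, N(s)⟩² + ⟨p, B(s)⟩² = n². Then ⟨p, N(s)⟩ = 0 for all s ∈ ℝ, i.e., α is a timelike rectifying curve with respect to p. -/

import Mathlib

/-!
Write `a = ⟨p, α⟩` and `t = ⟨p, T⟩`. Since `a' = t = n₁ sinh + n₂ cosh`, we get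
`a = n₁ cosh + n₂ sinh + c`, and the first Frenet equation gives
`κ_g ⟨p, N⟩ = t' - a = -c`. Expanding `p` in the frame `(α, T, N, B)` gives
`1 = a² - t² + ⟨p, N⟩² + ⟨p, B⟩² = a² - t² + n²`; as `(n₁ cosh + n₂ sinh)² - t² = n₁² - n₂² = 1 - n²`,
this says `(n₁ cosh s + n₂ sinh s + c)² = (n₁ cosh s + n₂ sinh s)²` for all `s`, which forces `c = 0`
because `1, cosh, sinh` are linearly independent. Hence `κ_g ⟨p, N⟩ = 0` with `κ_g > 0`.
-/

open Real

/-- The Minkowski scalar product on `ℝ⁴₁`: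
`⟨x,y⟩ = -x₁y₁ + x₂y₂ + x₃y₃ + x₄y₄`. -/
noncomputable def mdot (x y : Fin 4 → ℝ) : ℝ :=
  -(x 0 * y 0) + x 1 * y 1 + x 2 * y 2 + x 3 * y 3

theorem LinearMap.BilinForm.apply_self_eq_sum_of_iIsOrtho {K V ι : Type*} [Field K]
    [AddCommGroup V] [Module K V] [FiniteDimensional K V] [Fintype ι]
    {B : LinearMap.BilinForm K V} {e : ι → V} (he : B.iIsOrtho e)
    (hne : ∀ i, B (e i) (e i) ≠ 0) (hcard : Fintype.card ι = Module.finrank K V) (p : V) :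
    B p p = ∑ i, B p (e i) ^ 2 / B (e i) (e i) := by
  let b := basisOfLinearIndependentOfCardEqFinrank' e (linearIndependent_of_iIsOrtho he hne) hcard
  have hp : ∑ i, b.repr p i • e i = p := by simpa [b] using b.sum_repr p
  have hcoord : ∀ j, B p (e j) = b.repr p j * B (e j) (e j) := by
    intro j
    conv_lhs => rw [← hp]
    rw [LinearMap.BilinForm.sum_left, Finset.sum_eq_single j]
    · simp
    · intro i _ hij
      simp [LinearMap.BilinForm.iIsOrtho_def.1 he i j hij]
    · simp
  calc B p p = B p (∑ i, b.repr p i • e i) := by rw [hp]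
    _ = ∑ i, b.repr p i * B p (e i) := by simp
    _ = ∑ i, B p (e i) ^ 2 / B (e i) (e i) := by
        refine Finset.sum_congr rfl fun i _ => ?_
        rw [hcoord]
        field_simp [hne i]

noncomputable def minkowski : LinearMap.BilinForm ℝ (Fin 4 → ℝ) :=
  LinearMap.mk₂ ℝ mdot (fun _ _ _ => by simp only [mdot, Pi.add_apply]; ring)
    (fun _ _ _ => by simp only [mdot, Pi.smul_apply, smul_eq_mul]; ring)
    (fun _ _ _ => by simp only [mdot, Pi.add_apply]; ring)
    (fun _ _ _ => by simp only [mdot, Pi.smul_apply, smul_eq_mul]; ring)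

@[simp]
theorem minkowski_apply (x y : Fin 4 → ℝ) : minkowski x y = mdot x y := rfl

theorem mdot_comm (x y : Fin 4 → ℝ) : mdot x y = mdot y x := by
  unfold mdot
  ring

theorem mdot_self_eq_of_frame {u T N B : Fin 4 → ℝ}
    (huu : mdot u u = 1) (hTT : mdot T T = -1) (hNN : mdot N N = 1) (hBB : mdot B B = 1)
    (huT : mdot u T = 0) (huN : mdot u N = 0) (huB : mdot u B = 0)
    (hTN : mdot T N = 0) (hTB : mdot T B = 0) (hNB : mdot N B = 0) (p : Fin 4 → ℝ) :
    mdot p p = mdot p u ^ 2 - mdot p T ^ 2 + mdot p N ^ 2 + mdot p B ^ 2 := by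
  have hortho : minkowski.iIsOrtho ![u, T, N, B] := by
    rw [LinearMap.BilinForm.iIsOrtho_def]
    intro i j hij
    fin_cases i <;> fin_cases j <;> simp_all [mdot_comm]
  have h := minkowski.apply_self_eq_sum_of_iIsOrtho hortho
    (by intro i; fin_cases i <;> simp [huu, hTT, hNN, hBB]) (by simp) p
  simp only [minkowski_apply, Fin.sum_univ_four, Matrix.cons_val_zero, Matrix.cons_val_one,
    Matrix.cons_val, huu, hTT, hNN, hBB, div_one] at h
  linear_combination h

theorem HasDerivAt.const_mdot (p : Fin 4 → ℝ) {y : ℝ → Fin 4 → ℝ} {y' : Fin 4 → ℝ} {s : ℝ}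
    (hy : HasDerivAt y y' s) : HasDerivAt (fun s => mdot p (y s)) (mdot p y') s :=
  (LinearMap.toContinuousLinearMap (minkowski p)).hasFDerivAt.comp_hasDerivAt s hy

theorem exists_eq_mul_cosh_add_mul_sinh_add_const {f : ℝ → ℝ} {n₁ n₂ : ℝ}
    (hf : ∀ s, HasDerivAt f (n₁ * sinh s + n₂ * cosh s) s) :
    ∃ c, ∀ s, f s = n₁ * cosh s + n₂ * sinh s + c := by
  have hg : ∀ s, HasDerivAt (fun s => f s - (n₁ * cosh s + n₂ * sinh s)) 0 s := fun s => by
    have h := (hf s).sub (((hasDerivAt_cosh s).const_mul n₁).add ((hasDerivAt_sinh s).const_mul n₂))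
    rwa [sub_self] at h
  refine ⟨f 0 - n₁, fun s => ?_⟩
  have h := is_const_of_deriv_eq_zero (fun s => (hg s).differentiableAt) (fun s => (hg s).deriv) s 0
  simp only [cosh_zero, sinh_zero] at h
  linarith

theorem eq_zero_of_forall_add_mul_cosh_add_mul_sinh_eq_zero {a b c : ℝ}
    (h : ∀ s, a + b * cosh s + c * sinh s = 0) : a = 0 ∧ b = 0 ∧ c = 0 := by
  have h₀ := h 0
  have h₁ := h 1
  have h₂ := h (-1)
  simp only [cosh_zero, sinh_zero, cosh_neg, sinh_neg] at h₀ h₂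
  have hc : c * sinh 1 = 0 := by linarith
  have hb : b * (cosh 1 - 1) = 0 := by linarith
  have hc₀ := (mul_eq_zero.1 hc).resolve_right (sinh_ne_zero.2 one_ne_zero)
  have hb₀ := (mul_eq_zero.1 hb).resolve_right (sub_ne_zero.2 (one_lt_cosh.2 one_ne_zero).ne')
  exact ⟨by linarith, hb₀, hc₀⟩

theorem eq_zero_of_forall_sq_add_eq_sq {n₁ n₂ c : ℝ}
    (h : ∀ s, (n₁ * cosh s + n₂ * sinh s + c) ^ 2 = (n₁ * cosh s + n₂ * sinh s) ^ 2) :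
    c = 0 := by
  by_contra hc
  have h' : ∀ s, c / 2 + n₁ * cosh s + n₂ * sinh s = 0 := fun s =>
    mul_left_cancel₀ hc (by linear_combination h s / 2)
  exact hc (by linarith [(eq_zero_of_forall_add_mul_cosh_add_mul_sinh_eq_zero h').1])

theorem rectifying_of_tangent_component_general
    (α N B : ℝ → Fin 4 → ℝ) (κg : ℝ → ℝ)
    (hαsm : ContDiff ℝ (⊤ : ℕ∞) α)
    (hκpos : ∀ s, 0 < κg s)
    (hα1 : ∀ s, mdot (α s) (α s) = 1)
    (hT1 : ∀ s, mdot (deriv α s) (deriv α s) = -1)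
    (hN1 : ∀ s, mdot (N s) (N s) = 1)
    (hB1 : ∀ s, mdot (B s) (B s) = 1)
    (hαT : ∀ s, mdot (α s) (deriv α s) = 0)
    (hαN : ∀ s, mdot (α s) (N s) = 0)
    (hαB : ∀ s, mdot (α s) (B s) = 0)
    (hTN : ∀ s, mdot (deriv α s) (N s) = 0)
    (hTB : ∀ s, mdot (deriv α s) (B s) = 0)
    (hNB : ∀ s, mdot (N s) (B s) = 0)
    (hF1 : ∀ s, deriv (deriv α) s = α s + κg s • N s)
    (p : Fin 4 → ℝ) (hp : mdot p p = 1)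
    (n₁ n₂ n : ℝ) (hn : n₁ ^ 2 - n₂ ^ 2 + n ^ 2 = 1)
    (htan : ∀ s, mdot p (deriv α s) = n₁ * Real.sinh s + n₂ * Real.cosh s)
    (hperp : ∀ s, (mdot p (N s)) ^ 2 + (mdot p (B s)) ^ 2 = n ^ 2) :
    ∀ s, mdot p (N s) = 0 := by
  have hα' : ∀ s, HasDerivAt (fun s => mdot p (α s)) (n₁ * sinh s + n₂ * cosh s) s := fun s =>
    htan s ▸ (hαsm.differentiable (by simp) s).hasDerivAt.const_mdot p
  obtain ⟨c, hc⟩ := exists_eq_mul_cosh_add_mul_sinh_add_const hα'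
  have hκN : ∀ s, κg s * mdot p (N s) = -c := by
    intro s
    have hT' := ((contDiff_infty_iff_deriv.mp hαsm).2.differentiable (by simp) s).hasDerivAt
      |>.const_mdot p
    rw [hF1 s, ← minkowski_apply, map_add, map_smul] at hT'
    simp only [minkowski_apply, smul_eq_mul] at hT'
    have htan' : HasDerivAt (fun s => mdot p (deriv α s)) (n₁ * cosh s + n₂ * sinh s) s := by
      rw [funext htan]
      exact ((hasDerivAt_sinh s).const_mul n₁).add ((hasDerivAt_cosh s).const_mul n₂)
    linear_combination hT'.unique htan' - hc s
  have hc₀ : c = 0 := by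
    refine eq_zero_of_forall_sq_add_eq_sq (n₁ := n₁) (n₂ := n₂) fun s => ?_
    have h := mdot_self_eq_of_frame (hα1 s) (hT1 s) (hN1 s) (hB1 s) (hαT s) (hαN s) (hαB s)
      (hTN s) (hTB s) (hNB s) p
    rw [hp, hc s, htan s] at h
    linear_combination -h - hperp s - hn - (n₁ ^ 2 - n₂ ^ 2) * cosh_sq_sub_sinh_sq s
  intro s
  simpa [hc₀, (hκpos s).ne'] using hκN s

/-- If `⟨p, T(s)⟩ = n₁ sinh s + n₂ cosh s` and `⟨p,N⟩² + ⟨p,B⟩² = n²` with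
`n₁² - n₂² + n² = 1` along a timelike unit speed non-geodesic curve in `S³₁`,
then the curve is a timelike rectifying curve with respect to `p`. -/
theorem rectifying_of_tangent_component
    (α N B : ℝ → Fin 4 → ℝ) (κg τg : ℝ → ℝ)
    (hαsm : ContDiff ℝ (⊤ : ℕ∞) α) (hNsm : ContDiff ℝ (⊤ : ℕ∞) N)
    (hBsm : ContDiff ℝ (⊤ : ℕ∞) B)
    (hκsm : ContDiff ℝ (⊤ : ℕ∞) κg) (hτsm : ContDiff ℝ (⊤ : ℕ∞) τg)
    (hκpos : ∀ s, 0 < κg s)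
    (hα1 : ∀ s, mdot (α s) (α s) = 1)
    (hT1 : ∀ s, mdot (deriv α s) (deriv α s) = -1)
    (hN1 : ∀ s, mdot (N s) (N s) = 1)
    (hB1 : ∀ s, mdot (B s) (B s) = 1)
    (hαT : ∀ s, mdot (α s) (deriv α s) = 0)
    (hαN : ∀ s, mdot (α s) (N s) = 0)
    (hαB : ∀ s, mdot (α s) (B s) = 0)
    (hTN : ∀ s, mdot (deriv α s) (N s) = 0)
    (hTB : ∀ s, mdot (deriv α s) (B s) = 0)
    (hNB : ∀ s, mdot (N s) (B s) = 0)
    (hF1 : ∀ s, deriv (deriv α) s = α s + κg s • N s)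
    (hF2 : ∀ s, deriv N s = κg s • deriv α s + τg s • B s)
    (hF3 : ∀ s, deriv B s = -τg s • N s)
    (p : Fin 4 → ℝ) (hp : mdot p p = 1)
    (n₁ n₂ n : ℝ) (hn : n₁ ^ 2 - n₂ ^ 2 + n ^ 2 = 1)
    (htan : ∀ s, mdot p (deriv α s) = n₁ * Real.sinh s + n₂ * Real.cosh s)
    (hperp : ∀ s, (mdot p (N s)) ^ 2 + (mdot p (B s)) ^ 2 = n ^ 2) :
    ∀ s, mdot p (N s) = 0 :=
  rectifying_of_tangent_component_general α N B κg hαsm hκpos hα1 hT1 hN1 hB1 hαT hαN hαB hTN hTB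
    hNB hF1 p hp n₁ n₂ n hn htan hperp
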